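/- Let G be a group-groupoid. The functors Γ : GGdOp(G) → GGdCov(G), sending an action (M, w) to the covering p : G ⋉ M → G, and Φ : GGdCov(G) → GGdOp(G), sending a covering p : H → G to the induced action of G on H₀ via p₀, form an equivalence of categories: Φ ∘ Γ is (naturally isomorphic to) the identity on GGdOp(G), and Γ ∘ Φ is naturally isomorphic to the identity on GGdCov(G) via the maps T_p : H → G ⋉ H₀, h ↦ (p(h), α(h)). -/

import Mathlib

/-- A groupoid, given algebraically: a set of objects `O` and a set of morphisms `M`
with source, target, identity-assigning, (totalized) composition and inversion maps.
`comp b a` is the composite `b ∘ a`, only constrained when `src b = tgt a`. -/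
structure Gpd (O M : Type) where
  src : M → O
  tgt : M → O
  idm : O → M
  comp : M → M → M
  inv : M → M
  src_idm : ∀ x, src (idm x) = x
  tgt_idm : ∀ x, tgt (idm x) = x
  src_comp : ∀ b a, src b = tgt a → src (comp b a) = src a
  tgt_comp : ∀ b a, src b = tgt a → tgt (comp b a) = tgt b
  comp_assoc : ∀ c b a, src c = tgt b → src b = tgt a →
    comp c (comp b a) = comp (comp c b) a
  comp_idm : ∀ a, comp a (idm (src a)) = a
  idm_comp : ∀ a, comp (idm (tgt a)) a = a
  src_inv : ∀ a, src (inv a) = tgt a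
  tgt_inv : ∀ a, tgt (inv a) = src a
  inv_comp : ∀ a, comp (inv a) a = idm (src a)
  comp_inv : ∀ a, comp a (inv a) = idm (tgt a)

/-- A group-groupoid (a group object in groupoids): the objects and morphisms are
groups (written additively, not necessarily commutative) and the structure maps
are group homomorphisms; the interchange law holds. -/
structure GroupGpd (O M : Type) [AddGroup O] [AddGroup M] extends Gpd O M where
  src_add : ∀ a b, src (a + b) = src a + src b
  tgt_add : ∀ a b, tgt (a + b) = tgt a + tgt b
  idm_add : ∀ x y, idm (x + y) = idm x + idm y
  interchange : ∀ a b c d, src b = tgt a → src d = tgt c →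
    comp b a + comp d c = comp (b + d) (a + c)

/-- A morphism of group-groupoids: a functor between the underlying groupoids that is
a group homomorphism on morphisms and on objects. -/
structure GGHom {O M O' M' : Type} [AddGroup O] [AddGroup M] [AddGroup O'] [AddGroup M']
    (S : GroupGpd O M) (T : GroupGpd O' M') where
  f : M → M'
  f0 : O → O'
  map_src : ∀ a, T.src (f a) = f0 (S.src a)
  map_tgt : ∀ a, T.tgt (f a) = f0 (S.tgt a)
  map_idm : ∀ x, f (S.idm x) = T.idm (f0 x)
  map_comp : ∀ b a, S.src b = S.tgt a → f (S.comp b a) = T.comp (f b) (f a)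
  map_add : ∀ a b, f (a + b) = f a + f b
  map_add0 : ∀ x y, f0 (x + y) = f0 x + f0 y

/-- `p : H → G` is a covering morphism if it restricts to a bijection on each star. -/
def GGHom.IsCovering {O M O' M' : Type} [AddGroup O] [AddGroup M] [AddGroup O'] [AddGroup M']
    {S : GroupGpd O M} {T : GroupGpd O' M'} (p : GGHom S T) : Prop :=
  ∀ x : O, Set.BijOn p.f {a | S.src a = x} {b | T.src b = p.f0 x}

/-- The morphism group of the action groupoid `G ⋉ M`: the subgroup
`{(a,x) : α(a) = w(x)}` of `G × M`. -/
def actionSub {O MG M : Type} [AddGroup O] [AddGroup MG] [AddGroup M]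
    (S : GroupGpd O MG) (w : M →+ O) : AddSubgroup (MG × M) where
  carrier := {q | S.src q.1 = w q.2}
  zero_mem' := by
    have h := S.src_add 0 0
    rw [add_zero] at h
    have h0 : S.src (0 : MG) = 0 := left_eq_add.mp h
    simp [h0]
  add_mem' := by
    intro a b ha hb
    simp only [Set.mem_setOf_eq] at *
    show S.src (a.1 + b.1) = w (a.2 + b.2)
    rw [S.src_add, ha, hb, map_add]
  neg_mem' := by
    intro a ha
    simp only [Set.mem_setOf_eq] at *
    have h : S.src (-a.1) + S.src a.1 = 0 := by
      rw [← S.src_add, neg_add_cancel]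
      have h2 := S.src_add 0 0
      rw [add_zero] at h2
      exact (left_eq_add.mp h2)
    have : S.src (-a.1) = -S.src a.1 := eq_neg_of_add_eq_zero_left h
    show S.src (-a.1) = w (-a.2)
    rw [this, ha, map_neg]

/-! The action laws are exactly what makes `(b, a·x) ∘ (a, x) = (b ∘ a, x)` a well-defined
composition on `G ⋉ M` satisfying the groupoid axioms, and the last law is the interchange law
for it. The star of `x` in `G ⋉ M` is `{(a, x) : α a = w x}`, which the projection maps
bijectively onto the star of `w x` in `G`. Conversely, for a covering `p : H → G` the map
`h ↦ (p h, α h)` is injective and surjective precisely because `p` is so on each star, and it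
respects sums, composites and identities because `p` and `α` do. -/

section ActionGroupoid

variable {O MG M : Type} [AddGroup O] [AddGroup MG] [AddGroup M] {G : GroupGpd O MG} {w : M →+ O}

theorem mem_actionSub {q : MG × M} : q ∈ actionSub G w ↔ G.src q.1 = w q.2 := Iff.rfl

variable (G w) in
/-- Composition in `G ⋉ M`; for non-composable pairs it returns its first argument. -/
noncomputable def actionComp (q r : actionSub G w) : actionSub G w :=
  open Classical in
  if h : G.src (G.comp q.1.1 r.1.1) = w r.1.2 then ⟨(G.comp q.1.1 r.1.1, r.1.2), h⟩ else q

theorem actionComp_coe {q r : actionSub G w} (h : G.src q.1.1 = G.tgt r.1.1) :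
    (actionComp G w q r : MG × M) = (G.comp q.1.1 r.1.1, r.1.2) := by
  rw [actionComp, dif_pos (by rw [G.src_comp _ _ h]; exact r.2)]

theorem actionComp_fst {q r : actionSub G w} (h : G.src q.1.1 = G.tgt r.1.1) :
    (actionComp G w q r).1.1 = G.comp q.1.1 r.1.1 := by
  rw [actionComp_coe h]

theorem actionComp_snd {q r : actionSub G w} (h : G.src q.1.1 = G.tgt r.1.1) :
    (actionComp G w q r).1.2 = r.1.2 := by
  rw [actionComp_coe h]

variable (G w) in
structure GroupGpdAction where
  act : MG → M → M
  w_act : ∀ (a : MG) (x : M), G.src a = w x → w (act a x) = G.tgt a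
  act_act : ∀ (a b : MG) (x : M), G.src a = w x → G.src b = w (act a x) →
    act b (act a x) = act (G.comp b a) x
  act_idm : ∀ x : M, act (G.idm (w x)) x = x
  act_add_act : ∀ (a b : MG) (x y : M), G.src a = w x → G.src b = w y →
    act b y + act a x = act (b + a) (y + x)

namespace GroupGpdAction

variable (A : GroupGpdAction G w)

theorem src_eq_tgt_of {q r : actionSub G w} (h : q.1.2 = A.act r.1.1 r.1.2) :
    G.src q.1.1 = G.tgt r.1.1 := by
  rw [q.2, h, A.w_act _ _ r.2]

theorem act_comp {a b : MG} {x : M} (ha : G.src a = w x) (hb : G.src b = G.tgt a) :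
    A.act (G.comp b a) x = A.act b (A.act a x) :=
  (A.act_act a b x ha (by rw [hb, A.w_act a x ha])).symm

theorem act_inv_act {a : MG} {x : M} (ha : G.src a = w x) :
    A.act (G.inv a) (A.act a x) = x := by
  rw [← A.act_comp ha (G.src_inv a), G.inv_comp, ha, A.act_idm]

noncomputable def actionGpd : GroupGpd M (actionSub G w) where
  src q := q.1.2
  tgt q := A.act q.1.1 q.1.2
  idm x := ⟨(G.idm (w x), x), mem_actionSub.2 (G.src_idm (w x))⟩
  comp := actionComp G w
  inv q := ⟨(G.inv q.1.1, A.act q.1.1 q.1.2),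
    mem_actionSub.2 (by rw [G.src_inv, A.w_act _ _ q.2])⟩
  src_idm _ := rfl
  tgt_idm := A.act_idm
  src_comp b a h := actionComp_snd (A.src_eq_tgt_of h)
  tgt_comp b a h := by
    have hba := A.src_eq_tgt_of h
    rw [actionComp_fst hba, actionComp_snd hba, A.act_comp a.2 hba, ← h]
  comp_assoc c b a hcb hba := by
    have hcb' := A.src_eq_tgt_of hcb
    have hba' := A.src_eq_tgt_of hba
    have hc_ba : G.src c.1.1 = G.tgt (actionComp G w b a).1.1 := by
      rw [actionComp_fst hba', G.tgt_comp _ _ hba', hcb']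
    have hcb_a : G.src (actionComp G w c b).1.1 = G.tgt a.1.1 := by
      rw [actionComp_fst hcb', G.src_comp _ _ hcb', hba']
    apply Subtype.ext
    rw [actionComp_coe hc_ba, actionComp_coe hcb_a, actionComp_fst hba', actionComp_snd hba',
      actionComp_fst hcb', G.comp_assoc _ _ _ hcb' hba']
  comp_idm a := by
    have h : G.src a.1.1 = G.tgt (G.idm (w a.1.2)) := by rw [G.tgt_idm]; exact a.2
    refine Subtype.ext ((actionComp_coe h).trans (Prod.ext ?_ rfl))
    dsimp only
    rw [← a.2, G.comp_idm]
  idm_comp a := by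
    have h : G.src (G.idm (w (A.act a.1.1 a.1.2))) = G.tgt a.1.1 := by
      rw [G.src_idm, A.w_act _ _ a.2]
    refine Subtype.ext ((actionComp_coe h).trans (Prod.ext ?_ rfl))
    dsimp only
    rw [A.w_act _ _ a.2, G.idm_comp]
  src_inv _ := rfl
  tgt_inv a := A.act_inv_act a.2
  inv_comp a := by
    refine Subtype.ext ((actionComp_coe (G.src_inv _)).trans (Prod.ext ?_ rfl))
    dsimp only
    rw [G.inv_comp, a.2]
  comp_inv a := by
    refine Subtype.ext ((actionComp_coe (G.tgt_inv _).symm).trans (Prod.ext ?_ rfl))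
    dsimp only
    rw [G.comp_inv, A.w_act _ _ a.2]
  src_add _ _ := rfl
  tgt_add a b := (A.act_add_act _ _ _ _ b.2 a.2).symm
  idm_add x y := Subtype.ext (Prod.ext (by dsimp only; rw [map_add, G.idm_add]; rfl) rfl)
  interchange a b c d hba hdc := by
    have hba' := A.src_eq_tgt_of hba
    have hdc' := A.src_eq_tgt_of hdc
    have h : G.src (b + d).1.1 = G.tgt (a + c).1.1 := by
      rw [AddSubgroup.coe_add, AddSubgroup.coe_add, Prod.fst_add, Prod.fst_add, G.src_add,
        G.tgt_add, hba', hdc']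
    refine Subtype.ext ?_
    rw [AddSubgroup.coe_add, actionComp_coe hba', actionComp_coe hdc', actionComp_coe h]
    exact Prod.ext (G.interchange _ _ _ _ hba' hdc') rfl

noncomputable def proj : GGHom A.actionGpd G where
  f q := q.1.1
  f0 := w
  map_src q := q.2
  map_tgt q := (A.w_act _ _ q.2).symm
  map_idm _ := rfl
  map_comp _ _ h := actionComp_fst (A.src_eq_tgt_of h)
  map_add _ _ := rfl
  map_add0 := map_add w

theorem proj_isCovering : A.proj.IsCovering := by
  intro x
  refine ⟨fun q hq => ?_, fun q hq q' hq' h => ?_, fun a ha => ⟨⟨(a, x), ha⟩, rfl, rfl⟩⟩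
  · exact (mem_actionSub.1 q.2).trans (congrArg w hq)
  · exact Subtype.ext (Prod.ext h (hq.trans hq'.symm))

end GroupGpdAction

end ActionGroupoid

theorem GGHom.IsCovering.bijective_of_coe_eq {O MG OH MH : Type} [AddGroup O] [AddGroup MG]
    [AddGroup OH] [AddGroup MH] {G : GroupGpd O MG} {H : GroupGpd OH MH} {p : GGHom H G}
    (hp : p.IsCovering) {w : OH →+ O} (hw : ⇑w = p.f0) {T : MH → actionSub G w}
    (hT : ∀ h, (T h : MG × OH) = (p.f h, H.src h)) : Function.Bijective T := by
  refine ⟨fun h h' hTh => ?_, fun q => ?_⟩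
  · have hval := congrArg Subtype.val hTh
    rw [hT, hT, Prod.mk.injEq] at hval
    exact (hp (H.src h)).injOn rfl hval.2.symm hval.1
  · obtain ⟨h, hsrc, hf⟩ := (hp q.1.2).surjOn (show G.src q.1.1 = p.f0 q.1.2 from hw ▸ q.2)
    exact ⟨h, Subtype.ext (by rw [hT, hf, hsrc])⟩

/-- For a group-groupoid `G`, the functor `Γ` (sending an action
`(M,w)` to the covering `G ⋉ M → G`) and the functor `Φ` (sending a covering
`p : H → G` to the induced action of `G` on `H₀` via `p₀`) form an equivalence of
the category of actions of `G` on groups with the category of coverings of `G`: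

* (`Φ ∘ Γ` is the identity) for every action `(M, w, act)`, the projection
  `π : G ⋉ M → G` is a covering and the action induced from it is exactly `act`;
* (`Γ ∘ Φ ≅ id` via `T_p`) for every covering `p : H → G`, the map
  `T_p : h ↦ (p(h), α(h))` is a bijective morphism of group-groupoids from `H`
  to `G ⋉ H₀` over `G`, and `T` is natural in `p`. -/
theorem stmt10 {O MG : Type} [AddGroup O] [AddGroup MG] (G : GroupGpd O MG) :
    -- Φ ∘ Γ is the identity on actions:
    (∀ (M : Type) (_ : AddGroup M) (w : M →+ O) (act : MG → M → M),
      (∀ (a : MG) (x : M), G.src a = w x → w (act a x) = G.tgt a) →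
      (∀ (a b : MG) (x : M), G.src a = w x → G.src b = w (act a x) →
        act b (act a x) = act (G.comp b a) x) →
      (∀ x : M, act (G.idm (w x)) x = x) →
      (∀ (a b : MG) (x y : M), G.src a = w x → G.src b = w y →
        act b y + act a x = act (b + a) (y + x)) →
      ∃ (T : GroupGpd M ↥(actionSub G w)) (π : GGHom T G),
        (∀ q : ↥(actionSub G w), T.src q = q.1.2) ∧
        (∀ q : ↥(actionSub G w), T.tgt q = act q.1.1 q.1.2) ∧
        π.f = (fun q : ↥(actionSub G w) => q.1.1) ∧ π.f0 = ⇑w ∧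
        π.IsCovering ∧
        -- the action induced from the covering `π` is the original one:
        (∀ (a : MG) (x : M), G.src a = w x →
          ∀ m : ↥(actionSub G w), π.f m = a → T.src m = x → T.tgt m = act a x)) ∧
    -- Γ ∘ Φ is naturally isomorphic to the identity via the maps T_p:
    (∀ (OH MH : Type) (_ : AddGroup OH) (_ : AddGroup MH)
      (H : GroupGpd OH MH) (p : GGHom H G), p.IsCovering →
      ∀ (w : OH →+ O), ⇑w = p.f0 →
      ∀ ℓ : MG → OH → MH,
      (∀ (a : MG) (x : OH), G.src a = p.f0 x →
          p.f (ℓ a x) = a ∧ H.src (ℓ a x) = x) →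
      (∀ (a : MG) (x : OH) (m : MH), G.src a = p.f0 x →
          p.f m = a → H.src m = x → m = ℓ a x) →
      ∀ T : MH → ↥(actionSub G w),
      (∀ h : MH, (T h : MG × OH) = (p.f h, H.src h)) →
      Function.Bijective T ∧
      (∀ h h' : MH, T (h + h') = T h + T h') ∧
      (∀ h : MH, (T h).1.1 = p.f h) ∧
      (∀ b a : MH, H.src b = H.tgt a →
        ((T (H.comp b a)) : MG × OH) = (G.comp (p.f b) (p.f a), H.src a)) ∧
      (∀ x : OH, ((T (H.idm x)) : MG × OH) = (G.idm (w x), x)) ∧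
      (∀ q : ↥(actionSub G w), T (ℓ q.1.1 q.1.2) = q)) := by
  refine ⟨fun M _ w act w_act act_act act_idm act_add_act => ?_, ?_⟩
  · let A : GroupGpdAction G w := ⟨act, w_act, act_act, act_idm, act_add_act⟩
    refine ⟨A.actionGpd, A.proj, fun _ => rfl, fun _ => rfl, rfl, rfl, A.proj_isCovering, ?_⟩
    rintro a x - m rfl rfl
    rfl
  · intro OH MH _ _ H p hp w hw ℓ hℓ _ T hT
    refine ⟨hp.bijective_of_coe_eq hw hT, fun h h' => ?_, fun h => by rw [hT], fun b a hba => ?_,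
      fun x => ?_, fun q => ?_⟩
    · exact Subtype.ext (by rw [AddSubgroup.coe_add, hT, hT, hT, p.map_add, H.src_add]; rfl)
    · rw [hT, p.map_comp b a hba, H.src_comp b a hba]
    · rw [hT, p.map_idm, H.src_idm, hw]
    · obtain ⟨hf, hs⟩ := hℓ q.1.1 q.1.2 (hw ▸ q.2)
      exact Subtype.ext (by rw [hT, hf, hs])
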